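/- Assume that X does not creep downward (i.e., P_x(X_{τ−} = 0, τ < ∞) = 0 for all x > 0) and that 0 < π((−∞,0)) < ∞. Then the resurrected process has infinite lifetime: P_x(ζ = ∞) = 1 for every x > 0. -/

import Mathlib

noncomputable section
open MeasureTheory ProbabilityTheory Set Filter
open scoped ENNReal NNReal Classical

/-- The first passage time of a path into `(-∞,0]`, as an extended nonnegative real. -/
def tauP (f : ℝ → ℝ) : ℝ≥0∞ :=
  if ∃ t : ℝ, 0 ≤ t ∧ f t ≤ 0 then ENNReal.ofReal (sInf {t : ℝ | 0 ≤ t ∧ f t ≤ 0}) else ∞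

/-- The left limit `f(T-)` of a path at a time `T`, with the convention `f(0-) = f 0`. -/
def preVal (f : ℝ → ℝ) (T : ℝ≥0∞) : ℝ :=
  if T = 0 then f 0 else Function.leftLim f T.toReal

/-- The sequence of paths `X^{(n+1)}`, `n ≥ 0`, obtained from the path `f = X^{(1)}` by
successively removing the first jump through `0`. -/
def resSeq (f : ℝ → ℝ) : ℕ → ℝ → ℝ
  | 0 => f
  | n + 1 =>
      let g := resSeq f n
      if tauP g = ∞ then g
      else fun t =>
        if ENNReal.ofReal t < tauP g then g t
        else g t - (g (tauP g).toReal - preVal g (tauP g))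

/-- `tauSeq f n` is the resurrection time `τ_{n+1}`, the first passage time of `X^{(n+1)}`
into `(-∞,0]`. -/
def tauSeq (f : ℝ → ℝ) (n : ℕ) : ℝ≥0∞ := tauP (resSeq f n)

/-- The resurrection times `τ_n`, `n ≥ 0`, with `τ_0 = 0`. -/
def tauN (f : ℝ → ℝ) : ℕ → ℝ≥0∞
  | 0 => 0
  | n + 1 => tauSeq f n

/-- The resurrected path `Z` built from the path `f`: `Z_t = lim_n X^{(n)}_t 1_{t < τ_n}`. -/
def resProc (f : ℝ → ℝ) (t : ℝ) : ℝ :=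
  if h : ∃ n, ENNReal.ofReal t < tauSeq f n then resSeq f (Nat.find h) t else 0

/-- The absorption time `ζ = lim_n τ_n` of the resurrected path. -/
def zetaP (f : ℝ → ℝ) : ℝ≥0∞ := ⨆ n, tauSeq f n

/-- The exponential function on `ℝ≥0∞`. -/
def eexp (a : ℝ≥0∞) : ℝ≥0∞ := ∑' n : ℕ, a ^ n / (Nat.factorial n : ℝ≥0∞)

/-- The number of jumps of a path during the time interval `(0,1]` whose sizes lie in `A`,
as an element of `ℝ≥0∞`. -/
def jumpCount (f : ℝ → ℝ) (A : Set ℝ) : ℝ≥0∞ :=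
  ∑' _ : {t : ℝ // t ∈ Set.Ioc (0:ℝ) 1 ∧ f t - Function.leftLim f t ∈ A}, (1 : ℝ≥0∞)

/-- `X` is a Lévy process under `P`: it starts from `0`, has càdlàg paths and stationary
independent increments. -/
structure IsLevy {Ω : Type*} [MeasurableSpace Ω] (P : Measure Ω) (X : ℝ → Ω → ℝ) : Prop where
  measurable : ∀ t, Measurable (X t)
  init : ∀ ω, X 0 ω = 0
  cadlag_right : ∀ ω, ∀ t ≥ (0:ℝ), ContinuousWithinAt (fun s => X s ω) (Set.Ici t) t
  cadlag_left : ∀ ω, ∀ t > (0:ℝ),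
    Tendsto (fun s => X s ω) (nhdsWithin t (Set.Iio t)) (nhds (Function.leftLim (fun s => X s ω) t))
  indep_incr : ∀ (n : ℕ) (t : ℕ → ℝ), Monotone t → 0 ≤ t 0 →
    iIndepFun (m := fun _ : Fin n => Real.measurableSpace)
      (fun i ω => X (t (i + 1 : ℕ)) ω - X (t i) ω) P
  stat_incr : ∀ s t : ℝ, 0 ≤ s → 0 ≤ t →
    Measure.map (fun ω => X (s + t) ω - X s ω) P = Measure.map (X t) P

/-- `π` is the Lévy measure of the process `X` under `P` : on sets bounded away from `0`, it
gives the expected number of jumps of `X` during `(0,1]` with sizes in the set. -/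
def IsLevyMeasure {Ω : Type*} [MeasurableSpace Ω] (P : Measure Ω) (X : ℝ → Ω → ℝ)
    (π : Measure ℝ) : Prop :=
  π {0} = 0 ∧ ∀ A : Set ℝ, MeasurableSet A → (∃ ε > 0, A ⊆ {y : ℝ | ε ≤ |y|}) →
    π A = ∫⁻ ω, jumpCount (fun t => X t ω) A ∂P

/-- The negative tail `π̄⁻(y) = π((-∞,y])` of a Lévy measure. -/
def negTail (π : Measure ℝ) (y : ℝ) : ℝ≥0∞ := π (Set.Iic y)

/-- The path of the process started from `x`, i.e. the process `X` under `P_x`. -/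
def pathFrom {Ω : Type*} (X : ℝ → Ω → ℝ) (x : ℝ) (ω : Ω) : ℝ → ℝ := fun t => x + X t ω

/-!
Off a null set, the path `x + X` has finitely many negative jumps in every bounded interval, and
it creeps below no rational level `q ≤ 0` (the no-creeping hypothesis at the countably many
starting points `x - q`). For the first property, jumps during `(j, j + 1]` with size in
`[-1/(m+1), -1/(m+2)]` occur with probability at most `π [-1/(m+1), -1/(m+2)]`: by stationarity
of increments, observed at dyadic times (which detect the jumps of a càdlàg path), and the
defining property of `π` on `(0, 1]`. These bounds are summable in `m` since `π (-∞, 0) < ∞`.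

For such a path suppose `ζ < ∞`. After `τ_n` the resurrected path `X^{(n+1)}` equals the
original one raised by some `c ≥ 0`, and it never exceeds that raised path. If `X^{(n+1)}` had
left limit `0` at `τ_{n+1}`, the original path would approach `-c` from above there, and below
the lowest landing point of its finitely many earlier negative jumps it would cross some rational
level continuously. So each `τ_{n+1}` is a time of a negative jump of the original path and the
`τ_n` increase strictly: infinitely many negative jumps in `(0, ζ]`.
-/

open Topology
open Function (leftLim)

theorem exists_rat_forall_lt_of_finite {a : ℝ} (ha : a ≤ 0) {s : Set ℝ} (hs : s.Finite)
    (hlt : ∀ y ∈ s, a < y) : ∃ q : ℚ, a ≤ q ∧ (q : ℝ) ≤ 0 ∧ ∀ y ∈ s, (q : ℝ) < y := by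
  obtain ⟨ε, hε, hball⟩ := Metric.eventually_nhds_iff.1
    ((hs.eventually_all).2 fun y hy => eventually_lt_nhds (hlt y hy))
  rcases ha.eq_or_lt with rfl | ha
  · exact ⟨0, by simp, by simp, by simpa using hball (by rwa [dist_self])⟩
  obtain ⟨q, haq, hq⟩ := exists_rat_btwn (lt_min ha (lt_add_of_pos_right a hε))
  refine ⟨q, haq.le, hq.le.trans (min_le_left _ _), hball ?_⟩
  rw [Real.dist_eq, abs_of_pos (sub_pos.2 haq)]
  linarith [min_le_right (0 : ℝ) (a + ε)]

theorem exists_le_lt_succ {α : Type*} [LinearOrder α] {a : ℕ → α} {d : α} {k : ℕ} (hk : a k ≤ d)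
    {n : ℕ} (hkn : k ≤ n) (hn : d < a n) : ∃ m, k ≤ m ∧ a m ≤ d ∧ d < a (m + 1) := by
  induction n, hkn using Nat.le_induction with
  | base => exact absurd hn hk.not_gt
  | succ n hkn ih =>
    by_cases h : a n ≤ d
    · exact ⟨n, hkn, h, hn⟩
    · exact ih (not_le.1 h)

theorem tsum_measure_Ico_le (μ : Measure ℝ) {a : ℕ → ℝ} (ha : Monotone a) {c : ℝ}
    (hc : ∀ m, a m ≤ c) : ∑' m, μ (Ico (a m) (a (m + 1))) ≤ μ (Iio c) := by
  rw [← measure_iUnion (f := fun m => Ico (a m) (a (m + 1))) ha.pairwise_disjoint_on_Ico_succ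
    fun _ => measurableSet_Ico]
  exact measure_mono (iUnion_subset fun m _ hx => hx.2.trans_le (hc _))

theorem finite_inter_Ioc_of_forall_nat {S : Set ℝ}
    (h : ∀ j : ℕ, (S ∩ Ioc (j : ℝ) (j + 1)).Finite) (T : ℝ) : (S ∩ Ioc 0 T).Finite := by
  have hN : ∀ N : ℕ, (S ∩ Ioc 0 (N : ℝ)).Finite := by
    intro N
    induction N with
    | zero => simp
    | succ N ih =>
      rw [Nat.cast_succ, ← Ioc_union_Ioc_eq_Ioc N.cast_nonneg (le_add_of_nonneg_right zero_le_one),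
        inter_union_distrib_left]
      exact ih.union (h N)
  exact (hN ⌈T⌉₊).subset (inter_subset_inter_right _ (Ioc_subset_Ioc_right (Nat.le_ceil T)))

theorem tendsto_inv_two_pow : Tendsto (fun k : ℕ => ((2 : ℝ) ^ k)⁻¹) atTop (𝓝 0) :=
  tendsto_inv_atTop_zero.comp (tendsto_pow_atTop_atTop_of_one_lt one_lt_two)

def jump (f : ℝ → ℝ) (t : ℝ) : ℝ := f t - leftLim f t

structure Cadlag (f : ℝ → ℝ) : Prop where
  continuousWithinAt_Ici : ∀ t, 0 ≤ t → ContinuousWithinAt f (Ici t) t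
  tendsto_leftLim : ∀ t, 0 < t → Tendsto f (𝓝[<] t) (𝓝 (leftLim f t))

namespace Cadlag

variable {f : ℝ → ℝ}

theorem of_tendsto (hr : ∀ t, 0 ≤ t → ContinuousWithinAt f (Ici t) t)
    (hl : ∀ t, 0 < t → ∃ y, Tendsto f (𝓝[<] t) (𝓝 y)) : Cadlag f where
  continuousWithinAt_Ici := hr
  tendsto_leftLim t ht := by
    obtain ⟨y, hy⟩ := hl t ht
    rwa [leftLim_eq_of_tendsto hy]

theorem leftLim_const_add (hf : Cadlag f) (c : ℝ) {t : ℝ} (ht : 0 < t) :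
    leftLim (fun s => c + f s) t = c + leftLim f t :=
  leftLim_eq_of_tendsto ((hf.tendsto_leftLim t ht).const_add c)

theorem leftLim_sub_const (hf : Cadlag f) (c : ℝ) {t : ℝ} (ht : 0 < t) :
    leftLim (fun s => f s - c) t = leftLim f t - c :=
  leftLim_eq_of_tendsto ((hf.tendsto_leftLim t ht).sub_const c)

theorem jump_const_add (hf : Cadlag f) (c : ℝ) {t : ℝ} (ht : 0 < t) :
    jump (fun s => c + f s) t = jump f t := by
  rw [jump, jump, hf.leftLim_const_add c ht]
  ring

theorem const_add (hf : Cadlag f) (c : ℝ) : Cadlag (fun t => c + f t) :=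
  of_tendsto (fun t ht => continuousWithinAt_const.add (hf.continuousWithinAt_Ici t ht))
    fun t ht => ⟨_, (hf.tendsto_leftLim t ht).const_add c⟩

theorem sub_const (hf : Cadlag f) (c : ℝ) : Cadlag (fun t => f t - c) :=
  of_tendsto (fun t ht => (hf.continuousWithinAt_Ici t ht).sub continuousWithinAt_const)
    fun t ht => ⟨_, (hf.tendsto_leftLim t ht).sub_const c⟩

theorem exists_increment_near (hf : Cadlag f) {t ε : ℝ} (ht : 0 ≤ t) (hε : 0 < ε) :
    ∃ δ > 0, ∀ p q, 0 ≤ p → t - δ < p → p ≤ q → q < t + δ →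
      |f q - f p| < ε ∨ (p < t ∧ t ≤ q ∧ |f q - f p - jump f t| < ε) := by
  obtain ⟨u, htu, hright⟩ := mem_nhdsGE_iff_exists_Ico_subset.1
    ((hf.continuousWithinAt_Ici t ht).eventually (Metric.ball_mem_nhds _ (half_pos hε)))
  have hleft : ∃ l < t, ∀ s, l < s → s < t → 0 ≤ s → |f s - leftLim f t| < ε / 2 := by
    rcases ht.eq_or_lt with rfl | ht
    · exact ⟨-1, by norm_num, fun s _ hs h0 => absurd hs (not_lt.2 h0)⟩
    obtain ⟨l, hl, hsub⟩ := mem_nhdsLT_iff_exists_Ioo_subset.1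
      ((hf.tendsto_leftLim t ht).eventually (Metric.ball_mem_nhds _ (half_pos hε)))
    exact ⟨l, hl, fun s h1 h2 _ => hsub ⟨h1, h2⟩⟩
  obtain ⟨l, hlt, hleft⟩ := hleft
  have hR : ∀ s, t ≤ s → s < u → |f s - f t| < ε / 2 := fun s h1 h2 => hright ⟨h1, h2⟩
  refine ⟨min (u - t) (t - l), lt_min (sub_pos.2 htu) (sub_pos.2 hlt), fun p q hp hpδ hpq hqδ => ?_⟩
  have hδ₁ := min_le_left (u - t) (t - l)
  have hδ₂ := min_le_right (u - t) (t - l)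
  rcases lt_or_ge p t with hpt | htp
  · have hP := abs_lt.1 (hleft p (by linarith) hpt hp)
    rcases lt_or_ge q t with hqt | htq
    · have hQ := abs_lt.1 (hleft q (by linarith) hqt (hp.trans hpq))
      exact Or.inl (abs_lt.2 ⟨by linarith, by linarith⟩)
    · have hQ := abs_lt.1 (hR q htq (by linarith))
      exact Or.inr ⟨hpt, htq, abs_lt.2 ⟨by rw [jump]; linarith, by rw [jump]; linarith⟩⟩
  · have hP := abs_lt.1 (hR p htp (by linarith))
    have hQ := abs_lt.1 (hR q (htp.trans hpq) (by linarith))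
    exact Or.inl (abs_lt.2 ⟨by linarith, by linarith⟩)

theorem abs_jump_le_of_forall_lt (hf : Cadlag f) {s b e : ℝ} (hs : 0 < s) (hbs : b < s)
    (h : ∀ r, b < r → r < s → |f s - f r| < e) : |jump f s| ≤ e := by
  refine le_of_tendsto ((continuous_abs.tendsto _).comp
    ((hf.tendsto_leftLim s hs).const_sub (f s))) ?_
  filter_upwards [Ioo_mem_nhdsLT hbs] with r hr
  exact (h r hr.1 hr.2).le

theorem eventually_nhdsNE_abs_jump_lt (hf : Cadlag f) {t ε : ℝ} (ht : 0 ≤ t) (hε : 0 < ε) :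
    ∀ᶠ s in 𝓝[≠] t, 0 < s → |jump f s| < ε := by
  obtain ⟨δ, hδ, hnear⟩ := hf.exists_increment_near ht (half_pos hε)
  filter_upwards [self_mem_nhdsWithin, nhdsWithin_le_nhds (Metric.ball_mem_nhds t hδ)]
    with s hst hsδ hs
  rw [Metric.mem_ball, Real.dist_eq] at hsδ
  obtain ⟨hsδ₁, hsδ₂⟩ := abs_sub_lt_iff.1 hsδ
  -- compare `f s` with `f r` for `r` slightly left of `s` and on the same side of `t` as `s`
  have key : ∀ b, b < s → 0 ≤ b → t - δ ≤ b → (t ≤ s → t ≤ b) → |jump f s| < ε :=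
    fun b hbs hb0 hbδ hbt => (hf.abs_jump_le_of_forall_lt hs hbs fun r hbr hrs =>
      (hnear r s (hb0.trans hbr.le) (by linarith) hrs.le (by linarith)).resolve_right
        fun h => h.1.not_ge ((hbt h.2.1).trans hbr.le)).trans_lt (half_lt_self hε)
  rcases (Ne.symm hst).lt_or_gt with hts | hst
  · exact key t hts ht (by linarith) fun _ => le_rfl
  · exact key (max 0 (t - δ)) (max_lt hs (by linarith)) (le_max_left _ _) (le_max_right _ _)
      fun h => absurd h hst.not_ge

theorem finite_setOf_le_abs_jump (hf : Cadlag f) {ε : ℝ} (hε : 0 < ε) (v : ℝ) :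
    ({t | ε ≤ |jump f t|} ∩ Ioc 0 v).Finite := by
  obtain ⟨F, -, hcover⟩ := isCompact_Icc.elim_nhds_subcover
    (fun t => insert t {s | 0 < s → |jump f s| < ε})
    fun t ht => insert_mem_nhds_iff.2 (hf.eventually_nhdsNE_abs_jump_lt ht.1 hε)
  refine F.finite_toSet.subset fun s ⟨hjs, hs0, hsv⟩ => ?_
  obtain ⟨t, htF, hst⟩ := mem_iUnion₂.1 (hcover ⟨hs0.le, hsv⟩)
  rcases hst with rfl | hsmall
  · exact htF
  · exact absurd (hsmall hs0) hjs.not_gt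

end Cadlag

def removeJumpAt (f : ℝ → ℝ) (T : ℝ) (t : ℝ) : ℝ :=
  if t < T then f t else f t - jump f T

theorem Cadlag.removeJumpAt {f : ℝ → ℝ} (hf : Cadlag f) (T : ℝ) :
    Cadlag (removeJumpAt f T) := by
  refine of_tendsto (fun t ht => ?_) fun t ht => ?_
  · rcases lt_or_ge t T with htT | htT
    · refine (hf.continuousWithinAt_Ici t ht).congr_of_eventuallyEq ?_ (if_pos htT)
      filter_upwards [mem_nhdsWithin_of_mem_nhds (Iio_mem_nhds htT)] with s hs
      exact if_pos hs
    · refine ((hf.continuousWithinAt_Ici t ht).sub continuousWithinAt_const).congr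
        (fun s hs => if_neg (not_lt.2 (htT.trans hs))) (if_neg (not_lt.2 htT))
  · rcases le_or_gt t T with htT | htT
    · refine ⟨_, (hf.tendsto_leftLim t ht).congr' ?_⟩
      filter_upwards [self_mem_nhdsWithin] with s hs
      exact (if_pos (lt_of_lt_of_le hs htT)).symm
    · refine ⟨_, ((hf.tendsto_leftLim t ht).sub_const (jump f T)).congr' ?_⟩
      filter_upwards [Ioo_mem_nhdsLT htT] with s hs
      exact (if_neg (not_lt.2 hs.1.le)).symm

structure IsFirstPassage (f : ℝ → ℝ) (T : ℝ) : Prop where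
  pos : 0 < T
  nonpos : f T ≤ 0
  pos_of_lt : ∀ t, 0 ≤ t → t < T → 0 < f t

def CreepsDown (f : ℝ → ℝ) : Prop :=
  tauP f < ∞ ∧ preVal f (tauP f) = 0

namespace IsFirstPassage

variable {f : ℝ → ℝ} {T : ℝ}

theorem tauP_eq (h : IsFirstPassage f T) : tauP f = ENNReal.ofReal T := by
  have hex : ∃ t, 0 ≤ t ∧ f t ≤ 0 := ⟨T, h.pos.le, h.nonpos⟩
  rw [tauP, if_pos hex]
  refine congrArg _ (le_antisymm (csInf_le ⟨0, fun _ ht => ht.1⟩ ⟨h.pos.le, h.nonpos⟩) ?_)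
  refine le_csInf hex fun t ht => not_lt.1 fun htT => ?_
  exact (h.pos_of_lt t ht.1 htT).not_ge ht.2

theorem toReal_tauP (h : IsFirstPassage f T) : (tauP f).toReal = T := by
  rw [h.tauP_eq, ENNReal.toReal_ofReal h.pos.le]

theorem preVal_tauP (h : IsFirstPassage f T) : preVal f (tauP f) = leftLim f T := by
  rw [preVal, if_neg (by simp [h.tauP_eq, h.pos]), h.toReal_tauP]

theorem leftLim_nonneg (h : IsFirstPassage f T) (hf : Cadlag f) : 0 ≤ leftLim f T := by
  refine ge_of_tendsto (hf.tendsto_leftLim T h.pos) ?_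
  filter_upwards [Ioo_mem_nhdsLT h.pos] with s hs
  exact (h.pos_of_lt s hs.1.le hs.2).le

theorem creepsDown (h : IsFirstPassage f T) (hL : leftLim f T = 0) : CreepsDown f :=
  ⟨by simp [h.tauP_eq], by rw [h.preVal_tauP, hL]⟩

end IsFirstPassage

theorem tauP_ne_top {f : ℝ → ℝ} {t : ℝ} (ht : 0 ≤ t) (hft : f t ≤ 0) : tauP f ≠ ∞ := by
  simp [tauP, if_pos (⟨t, ht, hft⟩ : ∃ t, 0 ≤ t ∧ f t ≤ 0)]

theorem Cadlag.isFirstPassage {f : ℝ → ℝ} (hf : Cadlag f) (h0 : 0 < f 0) (hτ : tauP f ≠ ∞) :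
    IsFirstPassage f (tauP f).toReal := by
  have hex : ∃ t, 0 ≤ t ∧ f t ≤ 0 := by
    by_contra h
    exact hτ (if_neg h)
  have hbdd : BddBelow {t | 0 ≤ t ∧ f t ≤ 0} := ⟨0, fun _ ht => ht.1⟩
  set T := sInf {t | 0 ≤ t ∧ f t ≤ 0}
  have hT0 : 0 ≤ T := le_csInf hex fun _ ht => ht.1
  have hτT : (tauP f).toReal = T := by rw [tauP, if_pos hex, ENNReal.toReal_ofReal hT0]
  have hbefore : ∀ t, 0 ≤ t → t < T → 0 < f t := fun t ht htT =>
    not_le.1 fun hft => (csInf_le hbdd ⟨ht, hft⟩).not_gt htT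
  -- right continuity at `T` would otherwise keep `f` positive slightly beyond `T`
  have hfT : f T ≤ 0 := by
    by_contra! hpos
    obtain ⟨u, hTu, hsub⟩ := mem_nhdsGE_iff_exists_Ico_subset.1
      ((hf.continuousWithinAt_Ici T hT0).eventually (lt_mem_nhds hpos))
    refine (le_csInf hex fun s hs => not_lt.1 fun hsu => ?_).not_gt hTu
    exact (hsub ⟨csInf_le hbdd hs, hsu⟩ : 0 < f s).not_ge hs.2
  rw [hτT]
  exact ⟨hT0.lt_of_ne fun h => by rw [← h] at hfT; exact hfT.not_gt h0, hfT, hbefore⟩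

theorem ofReal_lt_tauP {f : ℝ → ℝ} (hf : Cadlag f) {T : ℝ} (hT : 0 ≤ T)
    (h : ∀ t, 0 ≤ t → t ≤ T → 0 < f t) : ENNReal.ofReal T < tauP f := by
  by_cases hτ : tauP f = ∞
  · simp [hτ]
  have hfp := hf.isFirstPassage (h 0 le_rfl hT) hτ
  rw [hfp.tauP_eq, ENNReal.ofReal_lt_ofReal_iff']
  exact ⟨not_le.1 fun h' => (h _ hfp.pos.le h').not_ge hfp.nonpos, hfp.pos⟩

section Resurrection

variable {f : ℝ → ℝ}

theorem resSeq_succ_of_tauP_eq_top {n : ℕ} (h : tauP (resSeq f n) = ∞) :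
    resSeq f (n + 1) = resSeq f n :=
  if_pos h

theorem resSeq_succ_of_isFirstPassage {n : ℕ} {T : ℝ} (h : IsFirstPassage (resSeq f n) T) :
    resSeq f (n + 1) = removeJumpAt (resSeq f n) T := by
  show (if tauP (resSeq f n) = ∞ then _ else _) = _
  rw [if_neg (by simp [h.tauP_eq]), h.preVal_tauP, h.toReal_tauP, h.tauP_eq]
  funext t
  simp only [ENNReal.ofReal_lt_ofReal_iff', h.pos, and_true]
  rfl

theorem cadlag_resSeq (hf : Cadlag f) (h0 : 0 < f 0) (n : ℕ) :
    Cadlag (resSeq f n) ∧ resSeq f n 0 = f 0 := by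
  induction n with
  | zero => exact ⟨hf, rfl⟩
  | succ n ih =>
    by_cases hτ : tauP (resSeq f n) = ∞
    · rwa [resSeq_succ_of_tauP_eq_top hτ]
    have hfp := ih.1.isFirstPassage (ih.2 ▸ h0) hτ
    rw [resSeq_succ_of_isFirstPassage hfp]
    exact ⟨ih.1.removeJumpAt _, (if_pos hfp.pos).trans ih.2⟩

theorem isFirstPassage_tauSeq (hf : Cadlag f) (h0 : 0 < f 0) {n : ℕ} (hτ : tauSeq f n ≠ ∞) :
    IsFirstPassage (resSeq f n) (tauSeq f n).toReal :=
  (cadlag_resSeq hf h0 n).1.isFirstPassage ((cadlag_resSeq hf h0 n).2 ▸ h0) hτ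

theorem exists_resSeq_eq_add (hf : Cadlag f) (h0 : 0 < f 0) (n : ℕ) :
    ∃ c ≥ 0, (∀ t, resSeq f n t ≤ f t + c) ∧
      ∀ t, (∀ k < n, tauSeq f k ≤ ENNReal.ofReal t) → resSeq f n t = f t + c := by
  induction n with
  | zero => exact ⟨0, le_rfl, fun t => by simp [resSeq], fun t _ => by simp [resSeq]⟩
  | succ n ih =>
    obtain ⟨c, hc, hle, heq⟩ := ih
    have heq' : ∀ t, (∀ k < n + 1, tauSeq f k ≤ ENNReal.ofReal t) → resSeq f n t = f t + c :=
      fun t ht => heq t fun k hk => ht k (hk.trans n.lt_succ_self)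
    by_cases hτ : tauSeq f n = ∞
    · rw [resSeq_succ_of_tauP_eq_top hτ]
      exact ⟨c, hc, hle, heq'⟩
    have hfp := isFirstPassage_tauSeq hf h0 hτ
    set T := (tauSeq f n).toReal
    have hjump : jump (resSeq f n) T ≤ 0 := by
      have := hfp.leftLim_nonneg (cadlag_resSeq hf h0 n).1
      have := hfp.nonpos
      rw [jump]
      linarith
    rw [resSeq_succ_of_isFirstPassage hfp]
    refine ⟨c - jump (resSeq f n) T, by linarith, fun t => ?_, fun t ht => ?_⟩
    · unfold removeJumpAt
      split_ifs <;> linarith [hle t]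
    · have hTt : T ≤ t := by
        have := ht n n.lt_succ_self
        rw [tauSeq, hfp.tauP_eq, ENNReal.ofReal_le_ofReal_iff'] at this
        exact this.resolve_right hfp.pos.not_ge
      rw [removeJumpAt, if_neg (not_lt.2 hTt), heq' t ht]
      ring

theorem exists_resSeq_eq_add_near (hf : Cadlag f) (h0 : 0 < f 0) {n : ℕ}
    (hlt : ∀ k < n, tauSeq f k < tauSeq f n) :
    ∃ c ≥ 0, ∃ r, ENNReal.ofReal r < tauSeq f n ∧ (∀ t, resSeq f n t ≤ f t + c) ∧
      ∀ t, r ≤ t → resSeq f n t = f t + c := by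
  obtain ⟨c, hc, hle, heq⟩ := exists_resSeq_eq_add hf h0 n
  have hpos : 0 < tauSeq f n := by
    obtain ⟨hg, hg0⟩ := cadlag_resSeq hf h0 n
    simpa [tauSeq] using ofReal_lt_tauP hg le_rfl fun t ht ht' => by rwa [le_antisymm ht' ht, hg0]
  obtain ⟨r, -, hsup, hr⟩ := ENNReal.lt_iff_exists_real_btwn.1
    ((Finset.sup_lt_iff hpos).2 fun k hk => hlt k (Finset.mem_range.1 hk))
  refine ⟨c, hc, r, hr, hle, fun t hrt => heq t fun k hk => ?_⟩
  exact ((Finset.le_sup (Finset.mem_range.2 hk)).trans hsup.le).trans (ENNReal.ofReal_le_ofReal hrt)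

end Resurrection

/-- Below the lowest landing point of the finitely many negative jumps before `T`, a level can
only be crossed continuously. -/
theorem Cadlag.exists_rat_creepsDown {f : ℝ → ℝ} (hf : Cadlag f) (h0 : 0 < f 0) {T c : ℝ}
    (hT : 0 < T) (hc : 0 ≤ c) (hbefore : ∀ t, 0 ≤ t → t < T → -c < f t) (hfT : f T ≤ -c)
    (hL : leftLim f T = -c) (hjump : ({t | jump f t < 0} ∩ Ioc 0 T).Finite) :
    ∃ q : ℚ, (q : ℝ) ≤ 0 ∧ CreepsDown (fun t => f t - q) := by
  obtain ⟨q, hcq, hq0, hqlt⟩ := exists_rat_forall_lt_of_finite (neg_nonpos.2 hc)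
    ((hjump.subset (inter_subset_inter_right _ Ioo_subset_Ioc_self)).image f)
    (by rintro _ ⟨t, ⟨-, ht⟩, rfl⟩; exact hbefore t ht.1.le ht.2)
  have hF : Cadlag (fun t => f t - q) := hf.sub_const q
  have hfp := hF.isFirstPassage (by linarith) (tauP_ne_top hT.le (by linarith))
  set σ := (tauP fun t => f t - q).toReal
  have hσT : σ ≤ T := not_lt.1 fun h => (hfp.pos_of_lt T hT.le h).not_ge (by linarith)
  have hLσ : leftLim (fun t => f t - q) σ = leftLim f σ - q := hf.leftLim_sub_const q hfp.pos
  refine ⟨q, hq0, hfp.creepsDown (le_antisymm ?_ (hfp.leftLim_nonneg hF))⟩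
  rcases hσT.eq_or_lt with hσT | hσT
  · rw [hLσ, hσT, hL]
    linarith
  · by_contra! hpos
    have hσ := hfp.nonpos
    have hjσ : jump f σ < 0 := by
      rw [jump]
      linarith
    exact (hqlt _ ⟨σ, ⟨hjσ, hfp.pos, hσT⟩, rfl⟩).not_ge (by linarith)

/-- A zero left limit of `X^{(n+1)}` at `τ_{n+1}` would make `f` creep down through a rational
level. -/
theorem Cadlag.tauSeq_lt_succ_and_jump_neg {f : ℝ → ℝ} (hf : Cadlag f) (h0 : 0 < f 0) {n : ℕ}
    (hτ : tauSeq f n ≠ ∞) (hlt : ∀ k < n, tauSeq f k < tauSeq f n)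
    (hjump : ({t | jump f t < 0} ∩ Ioc 0 (tauSeq f n).toReal).Finite)
    (hcreep : ∀ q : ℚ, (q : ℝ) ≤ 0 → ¬ CreepsDown (fun t => f t - q)) :
    tauSeq f n < tauSeq f (n + 1) ∧ jump f (tauSeq f n).toReal < 0 := by
  have hg := (cadlag_resSeq hf h0 n).1
  have hfp := isFirstPassage_tauSeq hf h0 hτ
  set g := resSeq f n
  set T := (tauSeq f n).toReal
  obtain ⟨c, hc, r, hr, hle, heq⟩ := exists_resSeq_eq_add_near hf h0 hlt
  have hrT : r < T := by
    rw [tauSeq, hfp.tauP_eq, ENNReal.ofReal_lt_ofReal_iff'] at hr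
    exact hr.1
  have hfT : f T = g T - c := by linarith [heq T hrT.le]
  have hfL : leftLim f T = leftLim g T - c := by
    refine leftLim_eq_of_tendsto (((hg.tendsto_leftLim T hfp.pos).sub_const c).congr' ?_)
    filter_upwards [Ioo_mem_nhdsLT hrT] with s hs
    linarith [heq s hs.1.le]
  have hℓ : 0 < leftLim g T := by
    refine (hfp.leftLim_nonneg hg).lt_of_ne' fun hℓ => ?_
    obtain ⟨q, hq, hcr⟩ := hf.exists_rat_creepsDown h0 hfp.pos hc
      (fun t ht htT => by linarith [hle t, hfp.pos_of_lt t ht htT]) (by linarith [hfp.nonpos])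
      (by rw [hfL, hℓ, zero_sub]) hjump
    exact hcreep q hq hcr
  constructor
  · rw [tauSeq, tauSeq, resSeq_succ_of_isFirstPassage hfp, hfp.tauP_eq]
    refine ofReal_lt_tauP (hg.removeJumpAt T) hfp.pos.le fun t ht htT => ?_
    rcases htT.lt_or_eq with htT | rfl
    · rw [_root_.removeJumpAt, if_pos htT]
      exact hfp.pos_of_lt t ht htT
    · rw [_root_.removeJumpAt, if_neg (lt_irrefl _), jump]
      linarith
  · rw [jump, hfT, hfL]
    linarith [hfp.nonpos]

theorem Cadlag.zetaP_eq_top {f : ℝ → ℝ} (hf : Cadlag f) (h0 : 0 < f 0)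
    (hjump : ∀ T, ({t | jump f t < 0} ∩ Ioc 0 T).Finite)
    (hcreep : ∀ q : ℚ, (q : ℝ) ≤ 0 → ¬ CreepsDown (fun t => f t - q)) :
    zetaP f = ∞ := by
  by_contra hζ
  have hτ : ∀ n, tauSeq f n ≠ ∞ := fun n h => hζ (top_le_iff.1 (h ▸ le_iSup (tauSeq f) n))
  have hstep : ∀ n, (∀ k < n, tauSeq f k < tauSeq f n) →
      tauSeq f n < tauSeq f (n + 1) ∧ jump f (tauSeq f n).toReal < 0 :=
    fun n hlt => hf.tauSeq_lt_succ_and_jump_neg h0 (hτ n) hlt (hjump _) hcreep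
  have hlt : ∀ n, ∀ k < n, tauSeq f k < tauSeq f n := by
    intro n
    induction n with
    | zero => exact fun k hk => absurd hk k.not_lt_zero
    | succ n ih =>
      intro k hk
      rcases Nat.lt_succ_iff_lt_or_eq.1 hk with hk | rfl
      · exact (ih k hk).trans (hstep n ih).1
      · exact (hstep k ih).1
  have hmono : StrictMono fun n => (tauSeq f n).toReal := fun m n hmn =>
    (ENNReal.toReal_lt_toReal (hτ m) (hτ n)).2 (hlt n m hmn)
  refine (hjump (zetaP f).toReal).not_infinite
    (infinite_of_injective_forall_mem hmono.injective fun n => ⟨(hstep n (hlt n)).2, ?_, ?_⟩)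
  · exact (isFirstPassage_tauSeq hf h0 (hτ n)).pos
  · exact ENNReal.toReal_mono hζ (le_iSup (tauSeq f) n)

def dyadicIncr (g : ℝ → ℝ) (u : ℝ) (km : ℕ × ℕ) : ℝ :=
  g (u + km.2 / 2 ^ km.1) - g u

/-- Applied to `dyadicIncr g u`, a measurable test for a jump of `g` during `(u, u + 1]` with size
in `[a, b]`; it is exact for càdlàg `g` once `b < 0`. -/
def dyadicJumpSet (a b : ℝ) : Set (ℕ × ℕ → ℝ) :=
  ⋂ n : ℕ, ⋃ k ≥ n, ⋃ m < 2 ^ k,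
    {v | v (k, m + 1) - v (k, m) ∈ Icc (a - 1 / (n + 1)) (b + 1 / (n + 1))}

theorem measurableSet_dyadicJumpSet (a b : ℝ) : MeasurableSet (dyadicJumpSet a b) :=
  .iInter fun _ => .biUnion (to_countable _) fun k _ => .biUnion (to_countable _) fun m _ =>
    ((measurable_pi_apply (k, m + 1)).sub (measurable_pi_apply (k, m))) measurableSet_Icc

theorem mem_dyadicJumpSet_dyadicIncr {g : ℝ → ℝ} {u a b : ℝ} :
    dyadicIncr g u ∈ dyadicJumpSet a b ↔ ∀ n : ℕ, ∃ k ≥ n, ∃ m : ℕ, m < 2 ^ k ∧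
      g (u + ((m : ℝ) + 1) / 2 ^ k) - g (u + m / 2 ^ k) ∈
        Icc (a - 1 / (n + 1)) (b + 1 / (n + 1)) := by
  simp only [dyadicJumpSet, dyadicIncr, mem_iInter, mem_iUnion, mem_ofPred_eq, exists_prop,
    Nat.cast_add, Nat.cast_one, sub_sub_sub_cancel_right]

theorem Cadlag.dyadicIncr_mem_dyadicJumpSet {g : ℝ → ℝ} (hg : Cadlag g) {u t a b : ℝ}
    (hu : 0 ≤ u) (ht : t ∈ Ioc u (u + 1)) (hJ : jump g t ∈ Icc a b) :
    dyadicIncr g u ∈ dyadicJumpSet a b := by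
  -- the dyadic interval of length `2⁻ᵏ` that contains `t` and is open on the left
  set c : ℕ → ℕ := fun k => ⌈(t - u) * 2 ^ k⌉₊
  have hc1 : ∀ k, 1 ≤ c k := fun k => Nat.one_le_ceil_iff.2 (by have := ht.1; positivity)
  have hc : ∀ k, (t - u) * 2 ^ k ≤ c k ∧ (c k : ℝ) < (t - u) * 2 ^ k + 1 := fun k =>
    ⟨Nat.le_ceil _, Nat.ceil_lt_add_one (by have := ht.1; positivity)⟩
  have hc2 : ∀ k, c k ≤ 2 ^ k := fun k => Nat.ceil_le.2 (by
    push_cast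
    nlinarith [ht.2, pow_pos (two_pos (α := ℝ)) k])
  have hbounds : ∀ k, t - u ≤ c k * (2 ^ k)⁻¹ ∧ c k * ((2 : ℝ) ^ k)⁻¹ < t - u + (2 ^ k)⁻¹ := by
    intro k
    have h2 : (0 : ℝ) < (2 ^ k)⁻¹ := by positivity
    have h1 := mul_le_mul_of_nonneg_right (hc k).1 h2.le
    have h3 := mul_lt_mul_of_pos_right (hc k).2 h2
    rw [mul_assoc, mul_inv_cancel₀ (by positivity), mul_one] at h1
    rw [add_mul, mul_assoc, mul_inv_cancel₀ (by positivity), mul_one, one_mul] at h3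
    exact ⟨h1, h3⟩
  have hp : ∀ k, t - (2 ^ k)⁻¹ ≤ u + (c k - 1) / 2 ^ k ∧ u + (c k - 1) / 2 ^ k < t := by
    intro k
    rw [div_eq_mul_inv, sub_mul, one_mul]
    constructor <;> linarith [hbounds k]
  have hq : ∀ k, t ≤ u + c k / 2 ^ k ∧ u + c k / 2 ^ k ≤ t + (2 ^ k)⁻¹ := by
    intro k
    rw [div_eq_mul_inv]
    constructor <;> linarith [hbounds k]
  have hlim : Tendsto (fun k => g (u + c k / 2 ^ k) - g (u + (c k - 1) / 2 ^ k)) atTop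
      (𝓝 (jump g t)) := by
    refine ((hg.continuousWithinAt_Ici t (hu.trans ht.1.le)).tendsto.comp ?_).sub
      ((hg.tendsto_leftLim t (hu.trans_lt ht.1)).comp ?_)
    · refine tendsto_nhdsWithin_iff.2 ⟨tendsto_of_tendsto_of_tendsto_of_le_of_le tendsto_const_nhds
        (by simpa using tendsto_inv_two_pow.const_add t) (fun k => (hq k).1) fun k => (hq k).2,
        Eventually.of_forall fun k => (hq k).1⟩
    · refine tendsto_nhdsWithin_iff.2 ⟨tendsto_of_tendsto_of_tendsto_of_le_of_le
        (by simpa using tendsto_inv_two_pow.const_sub t) tendsto_const_nhds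
        (fun k => (hp k).1) fun k => (hp k).2.le, Eventually.of_forall fun k => (hp k).2⟩
  refine mem_dyadicJumpSet_dyadicIncr.2 fun n => ?_
  have hn : (0 : ℝ) < 1 / (n + 1) := by positivity
  obtain ⟨k, hkn, hk⟩ := ((eventually_ge_atTop n).and (hlim.eventually (Ioo_mem_nhds
    (show a - 1 / (n + 1) < jump g t by linarith [hJ.1])
    (show jump g t < b + 1 / (n + 1) by linarith [hJ.2])))).exists
  refine ⟨k, hkn, c k - 1, by have := hc1 k; have := hc2 k; omega, ?_⟩
  have hcast : ((c k - 1 : ℕ) : ℝ) = c k - 1 := by rw [Nat.cast_sub (hc1 k), Nat.cast_one]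
  rw [hcast, sub_add_cancel]
  exact Ioo_subset_Icc_self hk

theorem Cadlag.exists_jump_mem_of_dyadicIncr_mem {g : ℝ → ℝ} (hg : Cadlag g) {u a b : ℝ}
    (hu : 0 ≤ u) (hb : b < 0) (h : dyadicIncr g u ∈ dyadicJumpSet a b) :
    ∃ t ∈ Ioc u (u + 1), jump g t ∈ Icc a b := by
  choose k hk m hm hD using mem_dyadicJumpSet_dyadicIncr.1 h
  set p : ℕ → ℝ := fun n => u + m n / 2 ^ k n
  set q : ℕ → ℝ := fun n => u + (m n + 1) / 2 ^ k n
  have hpq : ∀ n, q n = p n + (2 ^ k n)⁻¹ := fun n => by simp only [p, q]; ring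
  have hp : ∀ n, p n ∈ Icc u (u + 1) := fun n => by
    have h2 : (0 : ℝ) < 2 ^ k n := by positivity
    have : (m n : ℝ) + 1 ≤ 2 ^ k n := by exact_mod_cast hm n
    refine ⟨le_add_of_nonneg_right (by positivity), add_le_add le_rfl ?_⟩
    rw [div_le_one h2]
    linarith
  obtain ⟨t, htmem, φ, hφ, hpt⟩ := tendsto_subseq_of_bounded (Metric.isBounded_Icc u (u + 1)) hp
  rw [isClosed_Icc.closure_eq] at htmem
  have hqt : Tendsto (q ∘ φ) atTop (𝓝 t) := by
    have hk' : Tendsto (fun n => k (φ n)) atTop atTop :=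
      tendsto_atTop_mono (fun n => (hk (φ n)).trans' (hφ.id_le n)) tendsto_id
    simpa [Function.comp_def, hpq] using hpt.add (tendsto_inv_two_pow.comp hk')
  -- these increments are not small (they lie near `[a, b]` and `b < 0`), so near `t` they must
  -- straddle `t` and approximate its jump
  have key : ∀ ε, 0 < ε → ε ≤ -b / 2 → u < t ∧ a - 2 * ε < jump g t ∧ jump g t < b + 2 * ε := by
    intro ε hε hεb
    obtain ⟨δ, hδ, hnear⟩ := hg.exists_increment_near (hu.trans htmem.1) hε
    have hev : ∀ᶠ n in atTop, t - δ < p (φ n) ∧ q (φ n) < t + δ ∧ 1 / ((φ n : ℝ) + 1) < ε :=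
      ((hpt.eventually (Ioo_mem_nhds (show t - δ < t by linarith) (show t < t + δ by linarith))).and
        ((hqt.eventually (Iio_mem_nhds (show t < t + δ by linarith))).and
          ((tendsto_one_div_add_atTop_nhds_zero_nat.comp hφ.tendsto_atTop).eventually
            (gt_mem_nhds hε)))).mono fun n hn => ⟨hn.1.1, hn.2.1, hn.2.2⟩
    obtain ⟨n, hpδ, hqδ, hnε⟩ := hev.exists
    have hpq' : p (φ n) ≤ q (φ n) := by rw [hpq]; exact le_add_of_nonneg_right (by positivity)
    obtain ⟨hD₁, hD₂⟩ := hD (φ n)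
    rcases hnear _ _ (hu.trans (hp _).1) hpδ hpq' hqδ with hsmall | ⟨hpt', -, hJ⟩
    · exfalso
      have := (abs_lt.1 hsmall).1
      simp only [p, q] at this
      linarith
    · refine ⟨(hp _).1.trans_lt hpt', ?_, ?_⟩ <;>
      · have := abs_lt.1 hJ
        simp only [p, q] at this
        linarith
  have hmin : ∀ ε, 0 < ε → 0 < min (ε / 2) (-b / 2) := fun ε hε =>
    lt_min (by linarith) (by linarith)
  refine ⟨t, ⟨(key _ (hmin 1 one_pos) (min_le_right _ _)).1, htmem.2⟩,
    le_of_forall_pos_lt_add fun ε hε => ?_, le_of_forall_pos_lt_add fun ε hε => ?_⟩ <;>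
  · have := key _ (hmin ε hε) (min_le_right _ _)
    linarith [min_le_left (ε / 2) (-b / 2)]

theorem exists_restrict_dyadicIncr_eq (I : Finset (ℕ × ℕ)) :
    ∃ K M : ℕ, ∃ L : (Fin M → ℝ) → (I → ℝ), Measurable L ∧ ∀ (g : ℝ → ℝ) (u : ℝ),
      I.restrict (dyadicIncr g u) =
        L fun i => g (u + ((i + 1 : ℕ) : ℝ) / 2 ^ K) - g (u + (i : ℕ) / 2 ^ K) := by
  set K := I.sup Prod.fst
  set N : ℕ × ℕ → ℕ := fun km => km.2 * 2 ^ (K - km.1)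
  set M := I.sup N
  refine ⟨K, M, fun d km => ∑ i ∈ Finset.range (N km), if h : i < M then d ⟨i, h⟩ else 0,
    measurable_pi_lambda _ fun km => Finset.measurable_sum _ fun i _ => ?_, fun g u => ?_⟩
  · by_cases h : i < M
    · simpa only [dif_pos h] using measurable_pi_apply _
    · simpa only [dif_neg h] using measurable_const
  funext ⟨km, hkm⟩
  have hNM : N km ≤ M := Finset.le_sup hkm
  show dyadicIncr g u km = ∑ i ∈ Finset.range (N km), if h : i < M then _ else 0
  rw [Finset.sum_congr rfl
    (g := fun i => g (u + ((i + 1 : ℕ) : ℝ) / 2 ^ K) - g (u + (i : ℝ) / 2 ^ K))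
    fun i hi => by simp only [dif_pos ((Finset.mem_range.1 hi).trans_le hNM)],
    Finset.sum_range_sub (fun i => g (u + (i : ℝ) / 2 ^ K)), dyadicIncr]
  have hK : km.1 ≤ K := Finset.le_sup (f := Prod.fst) hkm
  congr 3
  · simp only [N, Nat.cast_mul, Nat.cast_pow, Nat.cast_ofNat]
    rw [← pow_sub_mul_pow (2 : ℝ) hK]
    field_simp
  · simp

theorem one_le_jumpCount {f : ℝ → ℝ} {A : Set ℝ} (h : ∃ t ∈ Ioc (0 : ℝ) 1, jump f t ∈ A) :
    1 ≤ jumpCount f A := by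
  obtain ⟨t, ht, htA⟩ := h
  exact ENNReal.le_tsum (f := fun _ => (1 : ℝ≥0∞)) ⟨t, ht, htA⟩

namespace IsLevy

variable {Ω : Type*} [MeasurableSpace Ω] {P : Measure Ω} {X : ℝ → Ω → ℝ} {π : Measure ℝ}

theorem cadlag (hX : IsLevy P X) (ω : Ω) : Cadlag (X · ω) :=
  ⟨hX.cadlag_right ω, hX.cadlag_left ω⟩

theorem map_increments (hX : IsLevy P X) {t : ℕ → ℝ} (ht : Monotone t) (ht0 : 0 ≤ t 0) (n : ℕ) :
    P.map (fun ω (i : Fin n) => X (t (i + 1 : ℕ)) ω - X (t i) ω) =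
      Measure.pi fun i : Fin n => P.map (X (t (i + 1 : ℕ) - t i)) := by
  refine ((hX.indep_incr n t ht ht0).map_fun_eq_pi_map fun i =>
    ((hX.measurable _).sub (hX.measurable _)).aemeasurable).trans (congrArg _ (funext fun i => ?_))
  rw [← hX.stat_incr _ _ (ht0.trans (ht (Nat.zero_le _))) (sub_nonneg.2 (ht (Nat.le_succ _))),
    add_sub_cancel]
  rfl

theorem measurable_dyadicIncr (hX : IsLevy P X) (u : ℝ) :
    Measurable fun ω => dyadicIncr (X · ω) u :=
  measurable_pi_lambda _ fun _ => (hX.measurable _).sub (hX.measurable _)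

theorem map_dyadicIncr [IsProbabilityMeasure P] (hX : IsLevy P X) {u : ℝ} (hu : 0 ≤ u) :
    P.map (fun ω => dyadicIncr (X · ω) u) = P.map (fun ω => dyadicIncr (X · ω) 0) := by
  -- each finite-dimensional marginal is the image under a fixed map of the same product law
  refine IsProjectiveLimit.unique
    (P := fun I => (P.map fun ω => dyadicIncr (X · ω) 0).map I.restrict) (fun I => ?_) fun I => rfl
  obtain ⟨K, M, L, hL, hrestrict⟩ := exists_restrict_dyadicIncr_eq I
  set grid : ℝ → Ω → Fin M → ℝ := fun v ω i =>
    X (v + ((i + 1 : ℕ) : ℝ) / 2 ^ K) ω - X (v + (i : ℕ) / 2 ^ K) ω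
  have hgrid : ∀ v, Measurable (grid v) := fun v =>
    measurable_pi_lambda _ fun _ => (hX.measurable _).sub (hX.measurable _)
  have hmap : ∀ v, (P.map fun ω => dyadicIncr (X · ω) v).map I.restrict = (P.map (grid v)).map L :=
    fun v => by
      rw [Measure.map_map (Finset.measurable_restrict I) (hX.measurable_dyadicIncr v),
        Measure.map_map hL (hgrid v)]
      exact congrArg (fun F => P.map F) (funext fun ω => hrestrict (X · ω) v)
  have hlaw : ∀ v, 0 ≤ v → P.map (grid v) =
      Measure.pi fun _ : Fin M => P.map (X ((2 : ℝ) ^ K)⁻¹) := fun v hv => by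
    rw [hX.map_increments (t := fun m : ℕ => v + m / 2 ^ K) ?_ (by simpa using hv)]
    · congr 1
      funext i
      congr 2
      push_cast
      ring
    · intro m m' h
      dsimp only
      gcongr
  refine (hmap u).trans ?_
  rw [hlaw u hu, ← hlaw 0 le_rfl]
  exact (hmap 0).symm

/-- Stationarity moves the event to `(0, 1]`, where it is controlled by the expected number of
such jumps. -/
theorem measure_exists_jump_mem_le [IsProbabilityMeasure P] (hX : IsLevy P X)
    (hπ : IsLevyMeasure P X π) {u a b : ℝ} (hu : 0 ≤ u) (hb : b < 0) :
    P {ω | ∃ t ∈ Ioc u (u + 1), jump (X · ω) t ∈ Icc a b} ≤ π (Icc a b) := by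
  have hD := measurableSet_dyadicJumpSet a b
  have hE₀ := hX.measurable_dyadicIncr 0 hD
  calc P {ω | ∃ t ∈ Ioc u (u + 1), jump (X · ω) t ∈ Icc a b}
      ≤ P ((fun ω => dyadicIncr (X · ω) u) ⁻¹' dyadicJumpSet a b) :=
        measure_mono fun ω ⟨t, ht, hJ⟩ => (hX.cadlag ω).dyadicIncr_mem_dyadicJumpSet hu ht hJ
    _ = P ((fun ω => dyadicIncr (X · ω) 0) ⁻¹' dyadicJumpSet a b) := by
        rw [← Measure.map_apply (hX.measurable_dyadicIncr u) hD,
          ← Measure.map_apply (hX.measurable_dyadicIncr 0) hD, hX.map_dyadicIncr hu]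
    _ = ∫⁻ ω, ((fun ω => dyadicIncr (X · ω) 0) ⁻¹' dyadicJumpSet a b).indicator 1 ω ∂P :=
        (lintegral_indicator_one hE₀).symm
    _ ≤ ∫⁻ ω, jumpCount (X · ω) (Icc a b) ∂P := by
        refine lintegral_mono (indicator_le fun ω hω => one_le_jumpCount ?_)
        simpa using (hX.cadlag ω).exists_jump_mem_of_dyadicIncr_mem le_rfl hb hω
    _ = π (Icc a b) := by
        refine (hπ.2 _ measurableSet_Icc ⟨-b, neg_pos.2 hb, fun y hy => ?_⟩).symm
        show -b ≤ |y|
        rw [abs_of_neg (hy.2.trans_lt hb)]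
        exact neg_le_neg hy.2

theorem measure_infinite_negJumps [IsProbabilityMeasure P] (hX : IsLevy P X)
    (hπ : IsLevyMeasure P X π) (hfin : π (Iio 0) < ∞) (j : ℕ) :
    P {ω | ({t | jump (X · ω) t < 0} ∩ Ioc (j : ℝ) (j + 1)).Infinite} = 0 := by
  set a : ℕ → ℝ := fun m => -(1 / ((m : ℝ) + 1))
  have ha : StrictMono a := fun m m' h => neg_lt_neg (Nat.one_div_lt_one_div h)
  have ha0 : ∀ m, a m < 0 := fun m => neg_neg_iff_pos.2 (Nat.one_div_pos_of_nat (α := ℝ))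
  have hlim : Tendsto a atTop (𝓝 0) := by
    simpa only [neg_zero] using (tendsto_one_div_add_atTop_nhds_zero_nat (𝕜 := ℝ)).neg
  -- consecutive closed intervals share an endpoint, so no point is counted more than twice
  have hsum : ∑' m, π (Icc (a m) (a (m + 1))) ≠ ∞ := by
    refine ne_top_of_le_ne_top (ENNReal.add_ne_top.2 ⟨hfin.ne, hfin.ne⟩) ?_
    calc ∑' m, π (Icc (a m) (a (m + 1)))
        ≤ ∑' m, (π (Ico (a m) (a (m + 1))) + π (Ico (a (m + 1)) (a (m + 1 + 1)))) := by
          refine ENNReal.tsum_le_tsum fun m => (measure_mono ?_).trans (measure_union_le _ _)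
          rw [Ico_union_Ico_eq_Ico (ha.monotone m.le_succ) (ha.monotone (m + 1).le_succ)]
          exact Icc_subset_Ico_right (ha (m + 1).lt_succ_self)
      _ ≤ π (Iio 0) + π (Iio 0) := by
          rw [ENNReal.tsum_add]
          exact add_le_add (tsum_measure_Ico_le π ha.monotone fun m => (ha0 m).le)
            (tsum_measure_Ico_le π (ha.monotone.comp fun _ _ h => Nat.succ_le_succ h)
              fun m => (ha0 _).le)
  refine nonpos_iff_eq_zero.1 (ge_of_tendsto' (ENNReal.tendsto_sum_nat_add _ hsum) fun k => ?_)
  calc P {ω | ({t | jump (X · ω) t < 0} ∩ Ioc (j : ℝ) (j + 1)).Infinite}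
      ≤ P (⋃ m, {ω | ∃ t ∈ Ioc (j : ℝ) (j + 1),
          jump (X · ω) t ∈ Icc (a (m + k)) (a (m + k + 1))}) :=
        measure_mono fun ω hω => ?_
    _ ≤ ∑' m, π (Icc (a (m + k)) (a (m + k + 1))) :=
        (measure_iUnion_le _).trans (ENNReal.tsum_le_tsum fun m =>
          hX.measure_exists_jump_mem_le hπ j.cast_nonneg (ha0 _))
  obtain ⟨t, ⟨htneg, htj⟩, htbig⟩ := (hω.sdiff ((hX.cadlag ω).finite_setOf_le_abs_jump
    (Nat.one_div_pos_of_nat (α := ℝ) (n := k)) (j + 1))).nonempty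
  have hsmall : a k < jump (X · ω) t := by
    have : |jump (X · ω) t| < 1 / ((k : ℝ) + 1) :=
      not_le.1 fun h => htbig ⟨h, j.cast_nonneg.trans_lt htj.1, htj.2⟩
    exact neg_lt_of_abs_lt this
  obtain ⟨n, hkn, hn⟩ := ((eventually_ge_atTop k).and (hlim.eventually (lt_mem_nhds htneg))).exists
  obtain ⟨m, hkm, hm₁, hm₂⟩ := exists_le_lt_succ hsmall.le hkn hn
  refine mem_iUnion.2 ⟨m - k, t, htj, ?_⟩
  rw [Nat.sub_add_cancel hkm]
  exact ⟨hm₁, hm₂.le⟩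

end IsLevy

theorem statement6_general {Ω : Type*} [MeasurableSpace Ω] (P : Measure Ω) [IsProbabilityMeasure P]
    (X : ℝ → Ω → ℝ) (hX : IsLevy P X) (π : Measure ℝ) (hπ : IsLevyMeasure P X π)
    (hnocreep : ∀ x : ℝ, 0 < x →
      P {ω | tauP (pathFrom X x ω) < ∞ ∧
        preVal (pathFrom X x ω) (tauP (pathFrom X x ω)) = 0} = 0)
    (hfin : π (Set.Iio 0) < ∞) :
    ∀ x : ℝ, 0 < x → P {ω | zetaP (pathFrom X x ω) = ∞} = 1 := by
  intro x hx
  have hjumps : ∀ᵐ ω ∂P, ∀ T, ({t | jump (X · ω) t < 0} ∩ Ioc 0 T).Finite := by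
    filter_upwards [ae_all_iff.2 fun j =>
      measure_eq_zero_iff_ae_notMem.1 (hX.measure_infinite_negJumps hπ hfin j)] with ω hω
    exact finite_inter_Ioc_of_forall_nat fun j => not_infinite.1 (hω j)
  have hcreep : ∀ᵐ ω ∂P, ∀ q : ℚ, (q : ℝ) ≤ 0 →
      ¬ CreepsDown (fun t => pathFrom X x ω t - q) := by
    refine ae_all_iff.2 fun q => ?_
    by_cases hq : (q : ℝ) ≤ 0
    · filter_upwards [measure_eq_zero_iff_ae_notMem.1 (hnocreep (x - q) (by linarith))] with ω hω _
      have hpath : (fun t => pathFrom X x ω t - q) = pathFrom X (x - q) ω := by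
        funext t
        simp only [pathFrom]
        ring
      rwa [hpath]
    · exact Eventually.of_forall fun ω h => absurd h hq
  refine (measure_congr (ae_eq_univ.2 (measure_eq_zero_iff_ae_notMem.2 ?_))).trans measure_univ
  filter_upwards [hjumps, hcreep] with ω hjump hcr hζ
  refine hζ (((hX.cadlag ω).const_add x).zetaP_eq_top (by simp [hX.init, hx]) (fun T => ?_) hcr)
  exact (hjump T).subset fun t ⟨ht, ht0⟩ =>
    ⟨((hX.cadlag ω).jump_const_add x ht0.1).symm.trans_lt ht, ht0⟩

/-- Proposition 4.2 (a): if `X` does not creep downward and `0 < π((-∞,0)) < ∞`, then the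
resurrected process has infinite lifetime: `P_x(ζ = ∞) = 1` for every `x > 0`. -/
theorem statement6 {Ω : Type*} [MeasurableSpace Ω] (P : Measure Ω) [IsProbabilityMeasure P]
    (X : ℝ → Ω → ℝ) (hX : IsLevy P X) (π : Measure ℝ) (hπ : IsLevyMeasure P X π)
    (hnocreep : ∀ x : ℝ, 0 < x →
      P {ω | tauP (pathFrom X x ω) < ∞ ∧
        preVal (pathFrom X x ω) (tauP (pathFrom X x ω)) = 0} = 0)
    (hpos : 0 < π (Set.Iio 0)) (hfin : π (Set.Iio 0) < ∞) :
    ∀ x : ℝ, 0 < x → P {ω | zetaP (pathFrom X x ω) = ∞} = 1 :=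
  statement6_general P X hX π hπ hnocreep hfin
end
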